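/- If σ is a uniform strategy profile on a game with bisimulation equivalence ∼ respecting the partition, and h, h' are histories from v₀ with h ∼ h' (componentwise), then the outcomes of the induced strategy profiles in the subgames after h and h' are componentwise bisimilar: Out(σ_{|h})(last(h))ₙ ∼ Out(σ_{|h'})(last(h'))ₙ for all n ∈ ℕ. -/

import Mathlib

/-- A history: a finite path starting at `v0`. -/
def IsHist {V : Type} (E : V → V → Prop) (v0 : V) (h : List V) : Prop :=
  h.head? = some v0 ∧ h.Chain' E

/-- Last vertex of a history (with default `v0`). -/
def lastOf {V : Type} (v0 : V) (h : List V) : V := h.getLast?.getD v0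

/-- A strategy profile `σ : P → List V → V` is valid if on every history it
proposes a successor of the last vertex. -/
def ValidProfile {V P : Type} (E : V → V → Prop) (owner : V → P) (v0 : V)
    (σ : P → List V → V) : Prop :=
  ∀ h, IsHist E v0 h → E (lastOf v0 h) (σ (owner (lastOf v0 h)) h)

/-- The successive histories produced by playing `σ` after the history `h0`. -/
def outHistFrom {V P : Type} (owner : V → P) (σ : P → List V → V) (v0 : V) (h0 : List V) :
    ℕ → List V
  | 0 => h0
  | n + 1 =>
      outHistFrom owner σ v0 h0 n ++
        [σ (owner (lastOf v0 (outHistFrom owner σ v0 h0 n))) (outHistFrom owner σ v0 h0 n)]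

/-- The infinite play obtained by the history `h0` followed by the outcome of `σ`. -/
def playFrom {V P : Type} (owner : V → P) (σ : P → List V → V) (v0 : V) (h0 : List V)
    (n : ℕ) : V :=
  (outHistFrom owner σ v0 h0 (n + 1)).getD n v0

/-- The outcome of the strategy profile `σ` from `v0`. -/
def outcomeSeq {V P : Type} (owner : V → P) (σ : P → List V → V) (v0 : V) : ℕ → V :=
  playFrom owner σ v0 [v0]

/-- `σ` is a Nash equilibrium from `v0`: no player has a profitable deviation. -/
def IsNE {V P : Type} [DecidableEq P] (E : V → V → Prop) (owner : V → P) (v0 : V)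
    (Gain : P → (ℕ → V) → Prop) (σ : P → List V → V) : Prop :=
  ∀ (i : P) (σ' : List V → V), (∀ h, IsHist E v0 h → E (lastOf v0 h) (σ' h)) →
    Gain i (outcomeSeq owner (Function.update σ i σ') v0) → Gain i (outcomeSeq owner σ v0)

/-- `σ` is a subgame perfect equilibrium from `v0`: after every history, no player has a
profitable deviation (gains being evaluated on the full play extending the history). -/
def IsSPE {V P : Type} [DecidableEq P] (E : V → V → Prop) (owner : V → P) (v0 : V)
    (Gain : P → (ℕ → V) → Prop) (σ : P → List V → V) : Prop :=
  ∀ h0, IsHist E v0 h0 →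
    ∀ (i : P) (σ' : List V → V), (∀ h, IsHist E v0 h → E (lastOf v0 h) (σ' h)) →
      Gain i (playFrom owner (Function.update σ i σ') v0 h0) →
      Gain i (playFrom owner σ v0 h0)

/-- `σ` is uniform w.r.t. the relation `r`: on componentwise `r`-related histories,
each player's choices are `r`-related. -/
def Uniform {V P : Type} (E : V → V → Prop) (v0 : V) (r : V → V → Prop)
    (σ : P → List V → V) : Prop :=
  ∀ (i : P) (h h' : List V), IsHist E v0 h → IsHist E v0 h' → List.Forall₂ r h h' →
    r (σ i h) (σ i h')

/-- Edges of the quotient game. -/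
def QEdge {V : Type} (s : Setoid V) (E : V → V → Prop) :
    Quotient s → Quotient s → Prop :=
  fun c c' => ∃ v v', Quotient.mk s v = c ∧ Quotient.mk s v' = c' ∧ E v v'

/-!
By induction on `n`, the histories obtained by playing `σ` for `n` rounds after `h` and after
`h'` stay componentwise `∼`-related: their last vertices are related, hence owned by the same
player, and uniformity relates the moves that player appends. Since these histories extend one
another, every position of the residual plays is read off one of them.
-/

theorem List.Forall₂.getD_rel {α β : Type*} {R : α → β → Prop} {l : List α} {l' : List β}
    (hl : List.Forall₂ R l l') {k : ℕ} (hk : k < l.length) (d : α) (d' : β) :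
    R (l.getD k d) (l'.getD k d') := by
  simpa [List.getD_eq_getElem, hk, hl.length_eq ▸ hk] using hl.get hk (hl.length_eq ▸ hk)

theorem List.IsPrefix.getD_eq {α : Type*} {l l' : List α} (hp : l <+: l') {k : ℕ}
    (hk : k < l.length) (d : α) : l.getD k d = l'.getD k d := by
  rw [List.getD_eq_getElem _ _ hk, List.getD_eq_getElem _ _ (hk.trans_le hp.length_le),
    hp.getElem hk]

theorem lastOf_eq_getD {V : Type} (v0 : V) (l : List V) :
    lastOf v0 l = l.getD (l.length - 1) v0 := by
  rw [lastOf, List.getLast?_eq_getElem?, List.getD_eq_getElem?_getD]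

theorem lastOf_rel_of_forall₂ {V : Type} {r : V → V → Prop} (v0 : V) {l l' : List V}
    (hl : List.Forall₂ r l l') (hne : l ≠ []) : r (lastOf v0 l) (lastOf v0 l') := by
  rw [lastOf_eq_getD, lastOf_eq_getD, ← hl.length_eq]
  exact hl.getD_rel (Nat.sub_one_lt (List.length_pos_iff.mpr hne).ne') v0 v0

section Histories

variable {V : Type} {E : V → V → Prop} {v0 : V} {h : List V}

theorem IsHist.ne_nil (hh : IsHist E v0 h) : h ≠ [] := by
  rintro rfl
  simp [IsHist] at hh

theorem IsHist.append_singleton (hh : IsHist E v0 h) {w : V} (hw : E (lastOf v0 h) w) :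
    IsHist E v0 (h ++ [w]) := by
  obtain ⟨hhead, hchain⟩ := hh
  refine ⟨by simp [List.head?_append, hhead], hchain.append (List.isChain_singleton w) ?_⟩
  intro x hx y hy
  simp_all [lastOf]

end Histories

section Plays

variable {V P : Type} (owner : V → P) (σ : P → List V → V) (v0 : V) (h0 : List V)

theorem length_outHistFrom (n : ℕ) :
    (outHistFrom owner σ v0 h0 n).length = h0.length + n := by
  induction n with
  | zero => rfl
  | succ n ih => simp [outHistFrom, ih, Nat.add_assoc]

theorem outHistFrom_prefix_of_le {n m : ℕ} (hnm : n ≤ m) :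
    outHistFrom owner σ v0 h0 n <+: outHistFrom owner σ v0 h0 m := by
  induction m, hnm using Nat.le_induction with
  | base => exact List.prefix_refl _
  | succ m _ ih => exact ih.trans (List.prefix_append _ _)

theorem playFrom_eq_getD_outHistFrom {k N : ℕ}
    (hk : k < (outHistFrom owner σ v0 h0 N).length) :
    playFrom owner σ v0 h0 k = (outHistFrom owner σ v0 h0 N).getD k v0 := by
  have hk' : k < (outHistFrom owner σ v0 h0 (k + 1)).length := by
    rw [length_outHistFrom]; omega
  rcases le_total (k + 1) N with hle | hle
  · exact (outHistFrom_prefix_of_le owner σ v0 h0 hle).getD_eq hk' v0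
  · exact ((outHistFrom_prefix_of_le owner σ v0 h0 hle).getD_eq hk v0).symm

variable {owner σ v0 h0} {E : V → V → Prop}

theorem IsHist.outHistFrom (hvalid : ValidProfile E owner v0 σ) (hh : IsHist E v0 h0)
    (n : ℕ) : IsHist E v0 (outHistFrom owner σ v0 h0 n) := by
  induction n with
  | zero => exact hh
  | succ n ih => exact ih.append_singleton (hvalid _ ih)

theorem forall₂_outHistFrom {r : V → V → Prop} (hpart : ∀ v v', r v v' → owner v = owner v')
    (hvalid : ValidProfile E owner v0 σ) (hunif : Uniform E v0 r σ) {h h' : List V}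
    (hh : IsHist E v0 h) (hh' : IsHist E v0 h') (hrel : List.Forall₂ r h h') (n : ℕ) :
    List.Forall₂ r (outHistFrom owner σ v0 h n) (outHistFrom owner σ v0 h' n) := by
  induction n with
  | zero => exact hrel
  | succ n ih =>
    have hist := hh.outHistFrom hvalid n
    have hist' := hh'.outHistFrom hvalid n
    have same_owner := hpart _ _ (lastOf_rel_of_forall₂ v0 ih hist.ne_nil)
    rw [outHistFrom, outHistFrom, same_owner]
    exact List.rel_append ih (List.Forall₂.cons (hunif _ _ _ hist hist' ih) List.Forall₂.nil)

end Plays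

theorem stmt17_general {V P : Type} (E : V → V → Prop) (owner : V → P) (v0 : V)
    (s : Setoid V)
    (hpart : ∀ v v', s.r v v' → owner v = owner v')
    (σ : P → List V → V)
    (hvalid : ValidProfile E owner v0 σ)
    (hunif : Uniform E v0 s.r σ)
    (h h' : List V) (hh : IsHist E v0 h) (hh' : IsHist E v0 h')
    (hrel : List.Forall₂ s.r h h') :
    ∀ n, s.r (playFrom owner σ v0 h (h.length - 1 + n))
             (playFrom owner σ v0 h' (h'.length - 1 + n)) := by
  intro n
  have hk : h.length - 1 + n < (outHistFrom owner σ v0 h (n + 1)).length := by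
    rw [length_outHistFrom]; omega
  have hk' : h.length - 1 + n < (outHistFrom owner σ v0 h' (n + 1)).length := by
    rw [length_outHistFrom, ← hrel.length_eq]; omega
  rw [← hrel.length_eq, playFrom_eq_getD_outHistFrom owner σ v0 h hk,
    playFrom_eq_getD_outHistFrom owner σ v0 h' hk']
  exact (forall₂_outHistFrom hpart hvalid hunif hh hh' hrel (n + 1)).getD_rel hk v0 v0

/-- If `σ` is a uniform strategy profile and `h ∼ h'` are componentwise bisimilar
histories from `v₀`, the outcomes of the residual profiles in the subgames after `h`
and `h'` are componentwise bisimilar.  (The residual outcome after `h` is the suffix of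
`playFrom … h` starting at position `|h| - 1`, i.e. at `last(h)`.) -/
theorem stmt17 {V P : Type} (E : V → V → Prop) (owner : V → P) (v0 : V)
    (s : Setoid V)
    (hbisim : ∀ v v' w, s.r v v' → E v w → ∃ w', E v' w' ∧ s.r w w')
    (hpart : ∀ v v', s.r v v' → owner v = owner v')
    (htotal : ∀ v : V, ∃ v', E v v')
    (σ : P → List V → V)
    (hvalid : ValidProfile E owner v0 σ)
    (hunif : Uniform E v0 s.r σ)
    (h h' : List V) (hh : IsHist E v0 h) (hh' : IsHist E v0 h')
    (hrel : List.Forall₂ s.r h h') :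
    ∀ n, s.r (playFrom owner σ v0 h (h.length - 1 + n))
             (playFrom owner σ v0 h' (h'.length - 1 + n)) :=
  stmt17_general E owner v0 s hpart σ hvalid hunif h h' hh hh' hrel
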